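/- In the chain of the previous construction, for t > 1 the distribution P^t((1,0^n),·) equals the product of the uniform distribution on [m] with the mixture (1 − ((m−2)/m)^{t−1})·(μ₁+μ₂)/2 + ((m−2)/m)^{t−1}·μ₁ on {0,1}^n. -/

import Mathlib

/-!
Started at `X = 1`, one step makes the `Y`-marginal `μ₁` and `X` uniform. From then on the law
stays of the form `uniform ⊗ ν`, and one step sends `ν` to `(μ₁ + μ₂ + (m - 2) ν) / m`: with
probability `1/m` each `Y` is resampled from `μ₁` or `μ₂`, otherwise it is kept. This affine map
fixes `(μ₁ + μ₂) / 2` and contracts deviations from it by `(m - 2) / m`.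
-/

open Finset

/-- The Markov chain on `[m] × {0,1}^n`: from `(X,Y)`, resample `Y ~ μ₁` if `X = 1`
(index `0`), `Y ~ μ₂` if `X = 2` (index `1`), keep `Y` otherwise; then `X` uniform. -/
noncomputable def mixChain (m n : ℕ) (μ₁ μ₂ : (Fin n → Bool) → ℝ) :
    Matrix (Fin m × (Fin n → Bool)) (Fin m × (Fin n → Bool)) ℝ :=
  Matrix.of fun s s' =>
    (1 / (m : ℝ)) *
      (if (s.1 : ℕ) = 0 then μ₁ s'.2
       else if (s.1 : ℕ) = 1 then μ₂ s'.2
       else if s'.2 = s.2 then 1 else 0)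

open Matrix

theorem Fin.sum_ite_val_eq_zero_one {M : Type*} [AddCommMonoid M] {m : ℕ} (hm : 2 ≤ m)
    (a b c : M) :
    ∑ x : Fin m, (if (x : ℕ) = 0 then a else if (x : ℕ) = 1 then b else c) =
      a + b + (m - 2) • c := by
  obtain ⟨k, rfl⟩ : ∃ k, m = k + 2 := ⟨m - 2, by omega⟩
  simp [Fin.sum_univ_succ, add_assoc]

section

variable {m n : ℕ} {μ₁ μ₂ : (Fin n → Bool) → ℝ}

theorem sum_mul_mixChain_apply {ν : (Fin n → Bool) → ℝ} (hν : ∑ y, ν y = 1) (x : Fin m)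
    (s : Fin m × (Fin n → Bool)) :
    ∑ y, ν y * mixChain m n μ₁ μ₂ (x, y) s =
      1 / m * (if (x : ℕ) = 0 then μ₁ s.2 else if (x : ℕ) = 1 then μ₂ s.2 else ν s.2) := by
  simp only [mixChain, Matrix.of_apply]
  split_ifs <;> simp [← sum_mul, hν, mul_comm]

theorem vecMul_mixChain_of_uniform (hm : 2 ≤ m) {ν : (Fin n → Bool) → ℝ} (hν : ∑ y, ν y = 1)
    (s : Fin m × (Fin n → Bool)) :
    ((fun s' : Fin m × (Fin n → Bool) => 1 / (m : ℝ) * ν s'.2) ᵥ* mixChain m n μ₁ μ₂) s =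
      1 / m * ((μ₁ s.2 + μ₂ s.2 + ((m : ℝ) - 2) * ν s.2) / m) := by
  simp only [vecMul, dotProduct, Fintype.sum_prod_type, mul_assoc, ← mul_sum,
    sum_mul_mixChain_apply hν, Fin.sum_ite_val_eq_zero_one hm, nsmul_eq_mul,
    Nat.cast_sub hm, Nat.cast_ofNat]
  ring

/-- The `Y`-marginal after `k + 1` steps from `X = 1`. -/
noncomputable def mixChainMarginal (m : ℕ) (μ₁ μ₂ : (Fin n → Bool) → ℝ) (k : ℕ)
    (y : Fin n → Bool) : ℝ :=
  (1 - (((m : ℝ) - 2) / m) ^ k) * ((μ₁ y + μ₂ y) / 2) + (((m : ℝ) - 2) / m) ^ k * μ₁ y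

theorem sum_mixChainMarginal (hμ₁ : ∑ y, μ₁ y = 1) (hμ₂ : ∑ y, μ₂ y = 1) (k : ℕ) :
    ∑ y, mixChainMarginal m μ₁ μ₂ k y = 1 := by
  simp only [mixChainMarginal, sum_add_distrib, ← mul_sum, ← sum_div, hμ₁, hμ₂]
  ring

theorem mixChainMarginal_succ (hm : m ≠ 0) (k : ℕ) (y : Fin n → Bool) :
    (μ₁ y + μ₂ y + ((m : ℝ) - 2) * mixChainMarginal m μ₁ μ₂ k y) / m =
      mixChainMarginal m μ₁ μ₂ (k + 1) y := by
  simp only [mixChainMarginal, pow_succ]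
  field_simp
  ring

theorem mixChain_pow_succ_apply (hm : 2 ≤ m) (hμ₁ : ∑ y, μ₁ y = 1) (hμ₂ : ∑ y, μ₂ y = 1)
    {x₀ : Fin m} (hx₀ : (x₀ : ℕ) = 0) (y₀ : Fin n → Bool) (k : ℕ)
    (s : Fin m × (Fin n → Bool)) :
    (mixChain m n μ₁ μ₂ ^ (k + 1)) (x₀, y₀) s = 1 / m * mixChainMarginal m μ₁ μ₂ k s.2 := by
  induction k generalizing s with
  | zero => simp [mixChain, hx₀, mixChainMarginal]
  | succ k ih =>
    have hrow : (mixChain m n μ₁ μ₂ ^ (k + 1)) (x₀, y₀) =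
        fun s' => 1 / (m : ℝ) * mixChainMarginal m μ₁ μ₂ k s'.2 := funext ih
    rw [pow_succ, mul_apply_eq_vecMul, hrow,
      vecMul_mixChain_of_uniform hm (sum_mixChainMarginal hμ₁ hμ₂ k),
      mixChainMarginal_succ (by omega)]

end

/-- For `t > 1`, `P^t((1,0ⁿ),·)` is the product of the uniform distribution on `[m]` with
`(1 − ((m−2)/m)^{t−1})·(μ₁+μ₂)/2 + ((m−2)/m)^{t−1}·μ₁` on `{0,1}^n`. -/
theorem stmt_9 (m n : ℕ) (hm : 3 ≤ m) (μ₁ μ₂ : (Fin n → Bool) → ℝ)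
    (hμ₁1 : ∑ y, μ₁ y = 1)
    (hμ₂1 : ∑ y, μ₂ y = 1)
    (t : ℕ) (ht : 1 < t) :
    ∀ s : Fin m × (Fin n → Bool),
      (mixChain m n μ₁ μ₂ ^ t) (⟨0, by omega⟩, fun _ => false) s =
        (1 / (m : ℝ)) *
          ((1 - (((m : ℝ) - 2) / m)^(t-1)) * ((μ₁ s.2 + μ₂ s.2) / 2) +
            (((m : ℝ) - 2) / m)^(t-1) * μ₁ s.2) := by
  obtain ⟨k, rfl⟩ : ∃ k, t = k + 1 := ⟨t - 1, by omega⟩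
  exact mixChain_pow_succ_apply (by omega) hμ₁1 hμ₂1 (x₀ := ⟨0, by omega⟩) rfl _ k
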